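/- arXiv:1105.0231 — 3 statements merged into one kernel-verified Lean document; each statement's English description precedes it below -/
import Mathlib

section
/- At every point of U, the forward characteristic derivative of the pressure satisfies p_t + c·p_x = −c²·(u_x − m·z_x − ((γ−1)/γ)·m_x·z); equivalently, β = −(p_t + c·p_x)/c² (Lemma 4.1, backward part). -/
open Real

/-!
With `p = K m² z^e`, `e = 2γ/(γ-1)`, the chain rule gives `p′ = K (2 m z^e m′ + e m² z^(e-1) z′)`.
The Euler equations give `m′ = c m_x` and `z′ = c (z_x - u_x / m)`, and since `e - 1 = (γ+1)/(γ-1)`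
and `K e = K_c` the factor `z^(e-1)` recombines with `K_c m` into `c`, leaving `p′ = -c² β`.
-/

/-- Partial derivative with respect to `t` (the first coordinate). -/
noncomputable def pdt (f : ℝ × ℝ → ℝ) (pt : ℝ × ℝ) : ℝ := fderiv ℝ f pt (1, 0)

/-- Partial derivative with respect to `x` (the second coordinate). -/
noncomputable def pdx (f : ℝ × ℝ → ℝ) (pt : ℝ × ℝ) : ℝ := fderiv ℝ f pt (0, 1)

theorem pdt_add_mul_pdx {f : ℝ × ℝ → ℝ} (pt : ℝ × ℝ) (a : ℝ) :
    pdt f pt + a * pdx f pt = fderiv ℝ f pt (1, a) := by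
  have hv : ((1 : ℝ), a) = (1, 0) + a • (0, 1) := by simp
  rw [hv, map_add, map_smul, smul_eq_mul, pdt, pdx]

theorem hasFDerivAt_const_mul_sq_mul_rpow {E : Type*} [NormedAddCommGroup E] [NormedSpace ℝ E]
    {m z : E → ℝ} {m' z' : E →L[ℝ] ℝ} {x : E} (K e : ℝ)
    (hm : HasFDerivAt m m' x) (hz : HasFDerivAt z z' x) (hzx : z x ≠ 0) :
    HasFDerivAt (fun y => K * m y ^ 2 * z y ^ e)
      ((2 * K * m x * z x ^ e) • m' + (K * e * m x ^ 2 * z x ^ (e - 1)) • z') x := by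
  have hm2 : HasFDerivAt (fun y => K * m y ^ 2) ((2 * K * m x) • m') x := by
    refine ((hm.pow 2).const_mul K).congr_fderiv ?_
    norm_num [smul_smul]
    ring_nf
  have hze : HasFDerivAt (fun y => z y ^ e) ((e * z x ^ (e - 1)) • z') x :=
    hz.rpow_const (Or.inl hzx)
  refine (hm2.mul hze).congr_fderiv ?_
  module

theorem stmt_1_general
    (γ Kc : ℝ) (hγ : 1 < γ)
    (U : Set (ℝ × ℝ)) (hU : IsOpen U)
    (u z m : ℝ × ℝ → ℝ)
    (hz : ContDiffOn ℝ 2 z U) (hm : ContDiffOn ℝ 2 m U)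
    (hzpos : ∀ pt ∈ U, 0 < z pt) (hmpos : ∀ pt ∈ U, 0 < m pt)
    (c p : ℝ × ℝ → ℝ)
    (hc : c = fun pt => Kc * m pt * z pt ^ ((γ + 1) / (γ - 1)))
    (hp : p = fun pt => ((γ - 1) / (2 * γ) * Kc) * (m pt) ^ 2 * z pt ^ (2 * γ / (γ - 1)))
    (heq1 : ∀ pt ∈ U, pdt z pt + (c pt / m pt) * pdx u pt = 0)
    (heq3 : ∀ pt ∈ U, pdt m pt = 0)
    (β : ℝ × ℝ → ℝ)
    (hβ : β = fun pt => pdx u pt - m pt * pdx z pt - ((γ - 1) / γ) * pdx m pt * z pt)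
 :
    ∀ pt ∈ U, pdt p pt + c pt * pdx p pt = -(c pt) ^ 2 * β pt := by
  intro pt hpt
  have hnhds := hU.mem_nhds hpt
  have hzpt := hzpos pt hpt
  have hDm := ((hm.differentiableOn two_ne_zero).differentiableAt hnhds).hasFDerivAt
  have hDz := ((hz.differentiableOn two_ne_zero).differentiableAt hnhds).hasFDerivAt
  have hDp := hasFDerivAt_const_mul_sq_mul_rpow ((γ - 1) / (2 * γ) * Kc) (2 * γ / (γ - 1))
    hDm hDz hzpt.ne'
  have hγ1 : γ - 1 ≠ 0 := sub_ne_zero.mpr hγ.ne'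
  have hexp : 2 * γ / (γ - 1) - 1 = (γ + 1) / (γ - 1) := by field_simp; ring
  have hze : z pt ^ (2 * γ / (γ - 1)) = z pt ^ ((γ + 1) / (γ - 1)) * z pt := by
    rw [← rpow_add_one hzpt.ne', ← hexp, sub_add_cancel]
  have hzt : pdt z pt = -(c pt / m pt * pdx u pt) := eq_neg_of_add_eq_zero_left (heq1 pt hpt)
  have hcpt : c pt = Kc * m pt * z pt ^ ((γ + 1) / (γ - 1)) := by rw [hc]
  rw [pdt_add_mul_pdx, hp, hDp.fderiv, add_apply, smul_apply, smul_apply, smul_eq_mul,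
    smul_eq_mul, ← pdt_add_mul_pdx, ← pdt_add_mul_pdx, heq3 pt hpt, hzt, hexp, hze, hβ, hcpt,
    zero_add]
  beta_reduce
  have hmpt : m pt ≠ 0 := (hmpos pt hpt).ne'
  have hγ0 : γ ≠ 0 := (one_pos.trans hγ).ne'
  generalize z pt ^ ((γ + 1) / (γ - 1)) = A
  field_simp
  ring

/-- Lemma 4.1 (backward part): `p′ = p_t + c·p_x = −c²·β` on `U`. -/
theorem stmt_1
    (γ Kc : ℝ) (hγ : 1 < γ) (hKc : 0 < Kc)
    (U : Set (ℝ × ℝ)) (hU : IsOpen U)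
    (u z m : ℝ × ℝ → ℝ)
    (hu : ContDiffOn ℝ 2 u U) (hz : ContDiffOn ℝ 2 z U) (hm : ContDiffOn ℝ 2 m U)
    (hzpos : ∀ pt ∈ U, 0 < z pt) (hmpos : ∀ pt ∈ U, 0 < m pt)
    (c p : ℝ × ℝ → ℝ)
    (hc : c = fun pt => Kc * m pt * z pt ^ ((γ + 1) / (γ - 1)))
    (hp : p = fun pt => ((γ - 1) / (2 * γ) * Kc) * (m pt) ^ 2 * z pt ^ (2 * γ / (γ - 1)))
    (heq1 : ∀ pt ∈ U, pdt z pt + (c pt / m pt) * pdx u pt = 0)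
    (heq2 : ∀ pt ∈ U, pdt u pt + m pt * c pt * pdx z pt + 2 * (p pt / m pt) * pdx m pt = 0)
    (heq3 : ∀ pt ∈ U, pdt m pt = 0)
    (α β : ℝ × ℝ → ℝ)
    (hα : α = fun pt => pdx u pt + m pt * pdx z pt + ((γ - 1) / γ) * pdx m pt * z pt)
    (hβ : β = fun pt => pdx u pt - m pt * pdx z pt - ((γ - 1) / γ) * pdx m pt * z pt)
 :
    ∀ pt ∈ U, pdt p pt + c pt * pdx p pt = -(c pt) ^ 2 * β pt :=
  stmt_1_general γ Kc hγ U hU u z m hz hm hzpos hmpos c p hc hp heq1 heq3 β hβ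
end

section
/- At every point of U, β satisfies the Riccati-type equation along backward characteristics: β_t − c·β_x = k₁·( −k₂·(α + 3β) + α·β − β² ) (Theorem 1.1, equation for β). -/
/-!
With `a = (γ+1)/(γ-1)` and `ℓ = (γ-1)/γ` the system reads `z_t = -K_c z^a u_x`,
`u_t = -K_c (m² z^a z_x + ℓ m z^(a+1) m_x)`, `m_t = 0`, and `c = K_c m z^a`. Differentiating
in `x` and exchanging the mixed partials expresses `(u_x)_t`, `(z_x)_t`, `(m_x)_t` through
`x`-derivatives alone. In `β_t - c β_x`, the derivative along the backward characteristic
direction `(1, -c)`, all second derivatives then cancel, and what is left is a quadratic form in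
`u_x, z_x, m_x` that rearranges to `k₁ (-k₂ (α + 3β) + αβ - β²)`.
-/

open Real

open Set

section SecondDerivative

variable {E F : Type*} [NormedAddCommGroup E] [NormedSpace ℝ E] [NormedAddCommGroup F]
  [NormedSpace ℝ F] {f : E → F} {x : E}

theorem ContDiffAt.differentiableAt_fderiv_apply (hf : ContDiffAt ℝ 2 f x) (v : E) :
    DifferentiableAt ℝ (fun y => fderiv ℝ f y v) x :=
  ((hf.fderiv_right (m := 1) le_rfl).differentiableAt one_ne_zero).clm_apply
    (differentiableAt_const v)

theorem ContDiffAt.fderiv_fderiv_apply_comm (hf : ContDiffAt ℝ 2 f x) (v w : E) :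
    fderiv ℝ (fun y => fderiv ℝ f y v) x w = fderiv ℝ (fun y => fderiv ℝ f y w) x v := by
  have hf' := (hf.fderiv_right (m := 1) le_rfl).differentiableAt one_ne_zero
  simpa [fderiv_clm_apply hf' (differentiableAt_const _)] using
    hf.isSymmSndFDerivAt (by simp) w v

end SecondDerivative

section PartialDerivatives

variable {U : Set (ℝ × ℝ)} {pt : ℝ × ℝ}

theorem pdt_pdx_eq_pdx_of_eqOn {f g : ℝ × ℝ → ℝ} (hU : IsOpen U)
    (hf : ContDiffOn ℝ 2 f U) (hfg : EqOn (pdt f) g U) (hpt : pt ∈ U) :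
    pdt (pdx f) pt = pdx g pt := by
  have hfg' : pdt f =ᶠ[nhds pt] g := Filter.eventuallyEq_of_mem (hU.mem_nhds hpt) hfg
  rw [pdx, ← hfg'.fderiv_eq]
  exact (hf.contDiffAt (hU.mem_nhds hpt)).fderiv_fderiv_apply_comm _ _

theorem differentiableAt_pdx {f : ℝ × ℝ → ℝ} (hU : IsOpen U) (hf : ContDiffOn ℝ 2 f U)
    (hpt : pt ∈ U) : DifferentiableAt ℝ (pdx f) pt :=
  (hf.contDiffAt (hU.mem_nhds hpt)).differentiableAt_fderiv_apply (0, 1)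

variable {κ a ℓ : ℝ} {u z m : ℝ × ℝ → ℝ}

theorem pdt_pdx_z_of_euler (hU : IsOpen U) (hu : ContDiffOn ℝ 2 u U) (hz : ContDiffOn ℝ 2 z U)
    (hzt : EqOn (pdt z) (fun q => -κ * (z q ^ a * pdx u q)) U) (hpt : pt ∈ U)
    (hz0 : z pt ≠ 0) :
    pdt (pdx z) pt =
      -κ * (z pt ^ a * pdx (pdx u) pt + a * z pt ^ (a - 1) * pdx z pt * pdx u pt) := by
  have hz' := ((hz.contDiffAt (hU.mem_nhds hpt)).differentiableAt two_ne_zero).hasFDerivAt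
  have := ((hz'.rpow_const (p := a) (Or.inl hz0)).fun_mul
    (differentiableAt_pdx hU hu hpt).hasFDerivAt).const_mul (-κ)
  rw [pdt_pdx_eq_pdx_of_eqOn hU hz hzt hpt, pdx, this.fderiv]
  simp only [pdx, smul_add, neg_smul, add_apply, neg_apply, smul_apply, smul_eq_mul, neg_mul]
  ring

theorem pdt_pdx_u_of_euler (hU : IsOpen U) (hu : ContDiffOn ℝ 2 u U) (hz : ContDiffOn ℝ 2 z U)
    (hm : ContDiffOn ℝ 2 m U)
    (hut : EqOn (pdt u)
      (fun q => -κ * (m q ^ 2 * z q ^ a * pdx z q + ℓ * m q * z q ^ (a + 1) * pdx m q)) U)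
    (hpt : pt ∈ U) (hz0 : z pt ≠ 0) :
    pdt (pdx u) pt = -κ * (m pt ^ 2 * z pt ^ a * pdx (pdx z) pt
      + (m pt ^ 2 * (a * z pt ^ (a - 1)) * pdx z pt + 2 * m pt * z pt ^ a * pdx m pt) * pdx z pt
      + ℓ * m pt * z pt ^ (a + 1) * pdx (pdx m) pt
      + ℓ * (m pt * ((a + 1) * z pt ^ a) * pdx z pt + z pt ^ (a + 1) * pdx m pt) * pdx m pt) := by
  have hz' := ((hz.contDiffAt (hU.mem_nhds hpt)).differentiableAt two_ne_zero).hasFDerivAt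
  have hm' := ((hm.contDiffAt (hU.mem_nhds hpt)).differentiableAt two_ne_zero).hasFDerivAt
  have := ((((hm'.pow 2).fun_mul (hz'.rpow_const (p := a) (Or.inl hz0))).fun_mul
    (differentiableAt_pdx hU hz hpt).hasFDerivAt).fun_add
      (((hm'.const_mul ℓ).fun_mul (hz'.rpow_const (p := a + 1) (Or.inl hz0))).fun_mul
        (differentiableAt_pdx hU hm hpt).hasFDerivAt)).const_mul (-κ)
  rw [pdt_pdx_eq_pdx_of_eqOn hU hu hut hpt, pdx, this.fderiv]
  simp only [pdx, Nat.add_one_sub_one, pow_one, nsmul_eq_mul, Nat.cast_ofNat, smul_add,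
    add_sub_cancel_right, neg_smul, add_apply, neg_apply, smul_apply, smul_eq_mul, neg_mul]
  ring

theorem pdt_sub_mul_pdx_eq_of_euler {β : ℝ × ℝ → ℝ} (hU : IsOpen U)
    (hu : ContDiffOn ℝ 2 u U) (hz : ContDiffOn ℝ 2 z U) (hm : ContDiffOn ℝ 2 m U)
    (hzt : EqOn (pdt z) (fun q => -κ * (z q ^ a * pdx u q)) U)
    (hut : EqOn (pdt u)
      (fun q => -κ * (m q ^ 2 * z q ^ a * pdx z q + ℓ * m q * z q ^ (a + 1) * pdx m q)) U)
    (hmt : EqOn (pdt m) 0 U)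
    (hβ : β = fun q => pdx u q - m q * pdx z q - ℓ * pdx m q * z q)
    (hpt : pt ∈ U) (hz0 : z pt ≠ 0) :
    pdt β pt - κ * m pt * z pt ^ a * pdx β pt =
      κ * z pt ^ (a - 1) * (a * m pt * pdx z pt * (pdx u pt - m pt * pdx z pt)
        + ℓ * z pt * pdx m pt * (pdx u pt - z pt * pdx m pt)
        - (1 + ℓ * a) * z pt * m pt * pdx z pt * pdx m pt) := by
  have hz' := ((hz.contDiffAt (hU.mem_nhds hpt)).differentiableAt two_ne_zero).hasFDerivAt
  have hm' := ((hm.contDiffAt (hU.mem_nhds hpt)).differentiableAt two_ne_zero).hasFDerivAt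
  have hβ' := (((differentiableAt_pdx hU hu hpt).hasFDerivAt.fun_sub
    (hm'.fun_mul (differentiableAt_pdx hU hz hpt).hasFDerivAt)).fun_sub
      (((differentiableAt_pdx hU hm hpt).hasFDerivAt.const_mul ℓ).fun_mul hz')).fderiv
  rw [← hβ] at hβ'
  have hβt : pdt β pt = pdt (pdx u) pt - (m pt * pdt (pdx z) pt + pdx z pt * pdt m pt)
      - ℓ * (pdx m pt * pdt z pt + z pt * pdt (pdx m) pt) := by
    simp only [pdt, hβ', sub_apply, add_apply, smul_apply, smul_eq_mul]
    ring
  have hβx : pdx β pt = pdx (pdx u) pt - (m pt * pdx (pdx z) pt + pdx z pt * pdx m pt)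
      - ℓ * (pdx m pt * pdx z pt + z pt * pdx (pdx m) pt) := by
    simp only [pdx, hβ', sub_apply, add_apply, smul_apply, smul_eq_mul]
    ring
  have hmx_t : pdt (pdx m) pt = 0 := by
    rw [pdt_pdx_eq_pdx_of_eqOn hU hm hmt hpt]
    simp [pdx]
  have hpow : z pt ^ a = z pt ^ (a - 1) * z pt := by rw [← rpow_add_one hz0]; ring_nf
  have hpow' : z pt ^ (a + 1) = z pt ^ (a - 1) * z pt * z pt := by rw [rpow_add_one hz0, hpow]
  rw [hβt, hβx, pdt_pdx_u_of_euler hU hu hz hm hut hpt hz0,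
    pdt_pdx_z_of_euler hU hu hz hzt hpt hz0, hmx_t, hzt hpt, hmt hpt]
  simp only [Pi.zero_apply, hpow', hpow]
  ring

end PartialDerivatives

theorem stmt_4_general
    (γ Kc : ℝ) (hγ : 1 < γ)
    (U : Set (ℝ × ℝ)) (hU : IsOpen U)
    (u z m : ℝ × ℝ → ℝ)
    (hu : ContDiffOn ℝ 2 u U) (hz : ContDiffOn ℝ 2 z U) (hm : ContDiffOn ℝ 2 m U)
    (hzpos : ∀ pt ∈ U, 0 < z pt) (hmpos : ∀ pt ∈ U, 0 < m pt)
    (c p : ℝ × ℝ → ℝ)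
    (hc : c = fun pt => Kc * m pt * z pt ^ ((γ + 1) / (γ - 1)))
    (hp : p = fun pt => ((γ - 1) / (2 * γ) * Kc) * (m pt) ^ 2 * z pt ^ (2 * γ / (γ - 1)))
    (heq1 : ∀ pt ∈ U, pdt z pt + (c pt / m pt) * pdx u pt = 0)
    (heq2 : ∀ pt ∈ U, pdt u pt + m pt * c pt * pdx z pt + 2 * (p pt / m pt) * pdx m pt = 0)
    (heq3 : ∀ pt ∈ U, pdt m pt = 0)
    (α β : ℝ × ℝ → ℝ)
    (hα : α = fun pt => pdx u pt + m pt * pdx z pt + ((γ - 1) / γ) * pdx m pt * z pt)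
    (hβ : β = fun pt => pdx u pt - m pt * pdx z pt - ((γ - 1) / γ) * pdx m pt * z pt)
    (k1 k2 : ℝ × ℝ → ℝ)
    (hk1 : k1 = fun pt => ((γ + 1) * Kc / (2 * (γ - 1))) * z pt ^ (2 / (γ - 1)))
    (hk2 : k2 = fun pt => ((γ - 1) / (γ * (γ + 1))) * z pt * pdx m pt)
 :
    ∀ pt ∈ U, pdt β pt - c pt * pdx β pt
      = k1 pt * (-k2 pt * (α pt + 3 * β pt) + α pt * β pt - (β pt) ^ 2) := by
  intro pt hpt
  have hγ1 : γ - 1 ≠ 0 := by linarith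
  have hγ0 : γ ≠ 0 := by linarith
  subst hc hp hα hk1 hk2
  beta_reduce at heq1 heq2 ⊢
  have hzt : EqOn (pdt z) (fun q => -Kc * (z q ^ ((γ + 1) / (γ - 1)) * pdx u q)) U := by
    intro q hq
    have hm0 := (hmpos q hq).ne'
    linear_combination (norm := (field_simp; ring)) heq1 q hq
  have hut : EqOn (pdt u) (fun q => -Kc * (m q ^ 2 * z q ^ ((γ + 1) / (γ - 1)) * pdx z q
      + (γ - 1) / γ * m q * z q ^ ((γ + 1) / (γ - 1) + 1) * pdx m q)) U := by
    intro q hq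
    have hm0 := (hmpos q hq).ne'
    rw [show (γ + 1) / (γ - 1) + 1 = 2 * γ / (γ - 1) by field_simp; ring]
    linear_combination (norm := (field_simp; ring)) heq2 q hq
  rw [pdt_sub_mul_pdx_eq_of_euler hU hu hz hm hzt hut heq3 hβ hpt (hzpos pt hpt).ne', hβ,
    show (γ + 1) / (γ - 1) - 1 = 2 / (γ - 1) by field_simp; ring]
  field_simp
  ring

/-- Theorem 1.1, equation for `β`:
`β‵ = β_t − c·β_x = k₁·(−k₂·(α + 3β) + α·β − β²)` on `U`. -/
theorem stmt_4
    (γ Kc : ℝ) (hγ : 1 < γ) (hKc : 0 < Kc)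
    (U : Set (ℝ × ℝ)) (hU : IsOpen U)
    (u z m : ℝ × ℝ → ℝ)
    (hu : ContDiffOn ℝ 2 u U) (hz : ContDiffOn ℝ 2 z U) (hm : ContDiffOn ℝ 2 m U)
    (hzpos : ∀ pt ∈ U, 0 < z pt) (hmpos : ∀ pt ∈ U, 0 < m pt)
    (c p : ℝ × ℝ → ℝ)
    (hc : c = fun pt => Kc * m pt * z pt ^ ((γ + 1) / (γ - 1)))
    (hp : p = fun pt => ((γ - 1) / (2 * γ) * Kc) * (m pt) ^ 2 * z pt ^ (2 * γ / (γ - 1)))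
    (heq1 : ∀ pt ∈ U, pdt z pt + (c pt / m pt) * pdx u pt = 0)
    (heq2 : ∀ pt ∈ U, pdt u pt + m pt * c pt * pdx z pt + 2 * (p pt / m pt) * pdx m pt = 0)
    (heq3 : ∀ pt ∈ U, pdt m pt = 0)
    (α β : ℝ × ℝ → ℝ)
    (hα : α = fun pt => pdx u pt + m pt * pdx z pt + ((γ - 1) / γ) * pdx m pt * z pt)
    (hβ : β = fun pt => pdx u pt - m pt * pdx z pt - ((γ - 1) / γ) * pdx m pt * z pt)
    (k1 k2 : ℝ × ℝ → ℝ)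
    (hk1 : k1 = fun pt => ((γ + 1) * Kc / (2 * (γ - 1))) * z pt ^ (2 / (γ - 1)))
    (hk2 : k2 = fun pt => ((γ - 1) / (γ * (γ + 1))) * z pt * pdx m pt)
 :
    ∀ pt ∈ U, pdt β pt - c pt * pdx β pt
      = k1 pt * (-k2 pt * (α pt + 3 * β pt) + α pt * β pt - (β pt) ^ 2) :=
  stmt_4_general γ Kc hγ U hU u z m hu hz hm hzpos hmpos c p hc hp heq1 heq2 heq3 α β hα hβ k1 k2
    hk1 hk2
end

section
/- Suppose in addition that m_x(t,x) ≠ 0 for every (t,x) ∈ U. If β ≡ 0 on U, then α ≡ 0 on U; and if α ≡ 0 on U, then β ≡ 0 on U (Corollary 5.1: in a region with strictly varying entropy there are no pure forward or pure backward waves). -/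
/-! Let `w = m z_x + κ m_x z` with `κ = (γ - 1)/γ`, so that `α = u_x + w` and `β = u_x - w`.
The Euler system reads `z_t = -(c/m) u_x`, `u_t = -c w`, `m_t = 0`. On a simple wave
`u_x = ε w` with `ε = ±1` it follows that `u_t = ε m z_t`. Computing `u_xt` from each of these two
relations, using `m_t = 0` and the symmetry of second derivatives, gives results that differ by
`ε (1 - κ) m_x z_t`. Since `κ ≠ 1` and `m_x ≠ 0`, this forces `z_t = 0`, hence `u_x = 0` and `w = 0`. -/

open Real

section PartialDerivatives

variable {f g : ℝ × ℝ → ℝ} {U : Set (ℝ × ℝ)} {pt : ℝ × ℝ}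

lemma pdt_add (hf : DifferentiableAt ℝ f pt) (hg : DifferentiableAt ℝ g pt) :
    pdt (fun q => f q + g q) pt = pdt f pt + pdt g pt := by
  simp [pdt, fderiv_fun_add hf hg]

lemma pdt_mul (hf : DifferentiableAt ℝ f pt) (hg : DifferentiableAt ℝ g pt) :
    pdt (fun q => f q * g q) pt = pdt f pt * g pt + f pt * pdt g pt := by
  simp only [pdt, fderiv_fun_mul hf hg, add_apply, smul_apply, smul_eq_mul]
  ring

lemma pdx_mul (hf : DifferentiableAt ℝ f pt) (hg : DifferentiableAt ℝ g pt) :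
    pdx (fun q => f q * g q) pt = pdx f pt * g pt + f pt * pdx g pt := by
  simp only [pdx, fderiv_fun_mul hf hg, add_apply, smul_apply, smul_eq_mul]
  ring

lemma pdt_const_mul (a : ℝ) (hg : DifferentiableAt ℝ g pt) :
    pdt (fun q => a * g q) pt = a * pdt g pt := by
  simp [pdt, fderiv_const_mul hg a]

lemma pdx_const_mul (a : ℝ) (hg : DifferentiableAt ℝ g pt) :
    pdx (fun q => a * g q) pt = a * pdx g pt := by
  simp [pdx, fderiv_const_mul hg a]

lemma pdt_congr_of_eqOn (hU : IsOpen U) (h : Set.EqOn f g U) (hpt : pt ∈ U) :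
    pdt f pt = pdt g pt := by
  rw [pdt, pdt, (Filter.eventuallyEq_of_mem (hU.mem_nhds hpt) h).fderiv_eq]

lemma pdx_congr_of_eqOn (hU : IsOpen U) (h : Set.EqOn f g U) (hpt : pt ∈ U) :
    pdx f pt = pdx g pt := by
  rw [pdx, pdx, (Filter.eventuallyEq_of_mem (hU.mem_nhds hpt) h).fderiv_eq]

lemma pdx_eq_zero_of_eqOn_zero (hU : IsOpen U) (h : Set.EqOn f 0 U) (hpt : pt ∈ U) :
    pdx f pt = 0 := by
  rw [pdx_congr_of_eqOn hU h hpt]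
  simp [pdx]

lemma ContDiffAt.differentiableAt_fderiv (hf : ContDiffAt ℝ 2 f pt) :
    DifferentiableAt ℝ (fderiv ℝ f) pt :=
  (hf.fderiv_right (m := 1) le_rfl).differentiableAt one_ne_zero

lemma ContDiffAt.differentiableAt_pdt (hf : ContDiffAt ℝ 2 f pt) :
    DifferentiableAt ℝ (pdt f) pt :=
  hf.differentiableAt_fderiv.clm_apply (differentiableAt_const _)

lemma ContDiffAt.differentiableAt_pdx (hf : ContDiffAt ℝ 2 f pt) :
    DifferentiableAt ℝ (pdx f) pt :=
  hf.differentiableAt_fderiv.clm_apply (differentiableAt_const _)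

lemma ContDiffAt.pdt_pdx_comm (hf : ContDiffAt ℝ 2 f pt) :
    pdt (pdx f) pt = pdx (pdt f) pt := by
  have hsymm := hf.isSymmSndFDerivAt (by simp [minSmoothness_of_isRCLikeNormedField])
  have hd := hf.differentiableAt_fderiv
  change fderiv ℝ (fun q => fderiv ℝ f q (0, 1)) pt (1, 0)
    = fderiv ℝ (fun q => fderiv ℝ f q (1, 0)) pt (0, 1)
  rw [fderiv_clm_apply hd (differentiableAt_const _), fderiv_clm_apply hd (differentiableAt_const _)]
  simpa using hsymm _ _

end PartialDerivatives

theorem pdx_mul_pdt_eq_zero_of_simple_wave {U : Set (ℝ × ℝ)} (hU : IsOpen U)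
    {u z m : ℝ × ℝ → ℝ} (hu : ContDiffOn ℝ 2 u U) (hz : ContDiffOn ℝ 2 z U)
    (hm : ContDiffOn ℝ 2 m U) {κ ε : ℝ} (hκ : κ ≠ 1) (hε : ε ≠ 0)
    (hmt : ∀ q ∈ U, pdt m q = 0)
    (hut : ∀ q ∈ U, pdt u q = ε * (m q * pdt z q))
    (hux : ∀ q ∈ U, pdx u q = ε * (m q * pdx z q + κ * pdx m q * z q))
    {pt : ℝ × ℝ} (hpt : pt ∈ U) :
    pdx m pt * pdt z pt = 0 := by
  have hu2 := (hu pt hpt).contDiffAt (hU.mem_nhds hpt)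
  have hz2 := (hz pt hpt).contDiffAt (hU.mem_nhds hpt)
  have hm2 := (hm pt hpt).contDiffAt (hU.mem_nhds hpt)
  have dz := hz2.differentiableAt two_ne_zero
  have dm := hm2.differentiableAt two_ne_zero
  have dzt := hz2.differentiableAt_pdt
  have dzx := hz2.differentiableAt_pdx
  have dmx := hm2.differentiableAt_pdx
  have hmxt : pdt (pdx m) pt = 0 := by
    rw [hm2.pdt_pdx_comm]
    exact pdx_eq_zero_of_eqOn_zero hU (fun q hq => hmt q hq) hpt
  have h₁ : pdt (pdx u) pt = ε * (pdx m pt * pdt z pt + m pt * pdx (pdt z) pt) := by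
    rw [hu2.pdt_pdx_comm, pdx_congr_of_eqOn hU (fun q hq => hut q hq) hpt,
      pdx_const_mul ε (dm.fun_mul dzt), pdx_mul dm dzt]
  have h₂ : pdt (pdx u) pt = ε * (m pt * pdx (pdt z) pt + κ * pdx m pt * pdt z pt) := by
    rw [pdt_congr_of_eqOn hU (fun q hq => hux q hq) hpt,
      pdt_const_mul ε ((dm.fun_mul dzx).fun_add ((dmx.const_mul κ).fun_mul dz)),
      pdt_add (dm.fun_mul dzx) ((dmx.const_mul κ).fun_mul dz), pdt_mul dm dzx,
      pdt_mul (dmx.const_mul κ) dz, pdt_const_mul κ dmx, hmt pt hpt, hmxt, ← hz2.pdt_pdx_comm]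
    ring
  have h : ε * (1 - κ) * (pdx m pt * pdt z pt) = 0 := by linear_combination h₂ - h₁
  simpa [hε, sub_ne_zero.2 hκ.symm] using h

theorem eq_zero_of_simple_wave {U : Set (ℝ × ℝ)} (hU : IsOpen U)
    {u z m c : ℝ × ℝ → ℝ} (hu : ContDiffOn ℝ 2 u U) (hz : ContDiffOn ℝ 2 z U)
    (hm : ContDiffOn ℝ 2 m U) {κ ε : ℝ} (hκ : κ ≠ 1) (hε : ε * ε = 1)
    (hc : ∀ q ∈ U, c q ≠ 0) (hm0 : ∀ q ∈ U, m q ≠ 0)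
    (hzt : ∀ q ∈ U, pdt z q = -(c q / m q * pdx u q))
    (hut : ∀ q ∈ U, pdt u q = -(c q * (m q * pdx z q + κ * pdx m q * z q)))
    (hmt : ∀ q ∈ U, pdt m q = 0)
    (hux : ∀ q ∈ U, pdx u q = ε * (m q * pdx z q + κ * pdx m q * z q))
    {pt : ℝ × ℝ} (hpt : pt ∈ U) (hmx : pdx m pt ≠ 0) :
    pdx u pt = 0 ∧ m pt * pdx z pt + κ * pdx m pt * z pt = 0 := by
  have hut' : ∀ q ∈ U, pdt u q = ε * (m q * pdt z q) := by
    intro q hq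
    rw [hut q hq, hzt q hq, hux q hq]
    field_simp [hm0 q hq]
    linear_combination (c q * (m q * pdx z q + κ * pdx m q * z q)) * hε
  have hzt0 : pdt z pt = 0 :=
    (mul_eq_zero.1 (pdx_mul_pdt_eq_zero_of_simple_wave hU hu hz hm hκ
      (left_ne_zero_of_mul_eq_one hε) hmt hut' hux hpt)).resolve_left hmx
  have hux0 : pdx u pt = 0 := by
    have h := hzt pt hpt
    rw [hzt0, eq_comm, neg_eq_zero] at h
    exact (mul_eq_zero.1 h).resolve_left (div_ne_zero (hc pt hpt) (hm0 pt hpt))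
  refine ⟨hux0, ?_⟩
  linear_combination ε * hux0 - ε * hux pt hpt - (m pt * pdx z pt + κ * pdx m pt * z pt) * hε

lemma two_mul_pressure_div_eq {γ Kc m z : ℝ} (hγ : 1 < γ) (hm : m ≠ 0) (hz : 0 < z) :
    2 * ((γ - 1) / (2 * γ) * Kc * m ^ 2 * z ^ (2 * γ / (γ - 1)) / m)
      = (γ - 1) / γ * (Kc * m * z ^ ((γ + 1) / (γ - 1))) * z := by
  have hγ1 : γ - 1 ≠ 0 := by linarith
  have hexp : 2 * γ / (γ - 1) = (γ + 1) / (γ - 1) + 1 := by field_simp; ring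
  rw [hexp, Real.rpow_add_one hz.ne']
  field_simp

/-- Corollary 5.1: if `m_x ≠ 0` on `U`, then `β ≡ 0` on `U` implies `α ≡ 0` on `U`,
and `α ≡ 0` on `U` implies `β ≡ 0` on `U`. -/
theorem stmt_5
    (γ Kc : ℝ) (hγ : 1 < γ) (hKc : 0 < Kc)
    (U : Set (ℝ × ℝ)) (hU : IsOpen U)
    (u z m : ℝ × ℝ → ℝ)
    (hu : ContDiffOn ℝ 2 u U) (hz : ContDiffOn ℝ 2 z U) (hm : ContDiffOn ℝ 2 m U)
    (hzpos : ∀ pt ∈ U, 0 < z pt) (hmpos : ∀ pt ∈ U, 0 < m pt)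
    (c p : ℝ × ℝ → ℝ)
    (hc : c = fun pt => Kc * m pt * z pt ^ ((γ + 1) / (γ - 1)))
    (hp : p = fun pt => ((γ - 1) / (2 * γ) * Kc) * (m pt) ^ 2 * z pt ^ (2 * γ / (γ - 1)))
    (heq1 : ∀ pt ∈ U, pdt z pt + (c pt / m pt) * pdx u pt = 0)
    (heq2 : ∀ pt ∈ U, pdt u pt + m pt * c pt * pdx z pt + 2 * (p pt / m pt) * pdx m pt = 0)
    (heq3 : ∀ pt ∈ U, pdt m pt = 0)
    (α β : ℝ × ℝ → ℝ)
    (hα : α = fun pt => pdx u pt + m pt * pdx z pt + ((γ - 1) / γ) * pdx m pt * z pt)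
    (hβ : β = fun pt => pdx u pt - m pt * pdx z pt - ((γ - 1) / γ) * pdx m pt * z pt)
    (hmx : ∀ pt ∈ U, pdx m pt ≠ 0) :
    ((∀ pt ∈ U, β pt = 0) → ∀ pt ∈ U, α pt = 0) ∧
      ((∀ pt ∈ U, α pt = 0) → ∀ pt ∈ U, β pt = 0) := by
  subst hc hp hα hβ
  have hκ : (γ - 1) / γ ≠ 1 := by
    rw [Ne, div_eq_one_iff_eq (by linarith)]
    linarith
  have hc0 : ∀ q ∈ U, Kc * m q * z q ^ ((γ + 1) / (γ - 1)) ≠ 0 := fun q hq => by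
    have := hmpos q hq; have := hzpos q hq; positivity
  have hut : ∀ q ∈ U, pdt u q = -(Kc * m q * z q ^ ((γ + 1) / (γ - 1)) *
      (m q * pdx z q + (γ - 1) / γ * pdx m q * z q)) := fun q hq => by
    linear_combination heq2 q hq
      - pdx m q * two_mul_pressure_div_eq (Kc := Kc) hγ (hmpos q hq).ne' (hzpos q hq)
  have key : ∀ ε : ℝ, ε * ε = 1 →
      (∀ q ∈ U, pdx u q = ε * (m q * pdx z q + (γ - 1) / γ * pdx m q * z q)) →
      ∀ pt ∈ U, pdx u pt = 0 ∧ m pt * pdx z pt + (γ - 1) / γ * pdx m pt * z pt = 0 :=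
    fun ε hε hux pt hpt =>
      eq_zero_of_simple_wave hU hu hz hm hκ hε hc0 (fun q hq => (hmpos q hq).ne')
        (fun q hq => by linear_combination heq1 q hq) hut heq3 hux hpt (hmx pt hpt)
  constructor
  · intro hβ pt hpt
    obtain ⟨hux, hw⟩ := key 1 (by norm_num) (fun q hq => by linear_combination hβ q hq) pt hpt
    linear_combination hux + hw
  · intro hα pt hpt
    obtain ⟨hux, hw⟩ := key (-1) (by norm_num) (fun q hq => by linear_combination hα q hq) pt hpt
    linear_combination hux - hw
end
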